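/- arXiv:1806.02073 — 16 statements merged into one kernel-verified Lean document; each statement's English description precedes it below -/
import Mathlib

section
/- Let X be a nonempty set and let i, j ∈ {1,2,3,4} with j < i. A binary operation F : X² → X is (i,j)-selective if and only if F is constant. -/
/-- `pick x1 x2 x3 x4 n` returns `xₙ` for `n ∈ {1,2,3,4}` (1-based indexing). -/
def pick {X : Type*} (x1 x2 x3 x4 : X) : ℕ → X
  | 1 => x1
  | 2 => x2
  | 3 => x3
  | _ => x4

/-- `F` is `(i,j)`-selective. -/
def IsSelective {X : Type*} (F : X → X → X) (i j : ℕ) : Prop :=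
  ∀ x1 x2 x3 x4 : X,
    F (F x1 x2) (F x3 x4) = F (pick x1 x2 x3 x4 i) (pick x1 x2 x3 x4 j)

theorem stmt_0 {X : Type*} [Nonempty X] (F : X → X → X) (i j : ℕ)
    (hi : i ∈ ({1, 2, 3, 4} : Set ℕ)) (hj : j ∈ ({1, 2, 3, 4} : Set ℕ))
    (hji : j < i) :
    IsSelective F i j ↔ ∃ c : X, ∀ x y : X, F x y = c := by
  constructor
  · intro h
    obtain ⟨a⟩ := (inferInstance : Nonempty X)
    refine ⟨F a a, fun x y => ?_⟩
    simp only [Set.mem_insert_iff, Set.mem_singleton_iff] at hi hj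
    have key : ∀ p q r s : X, F p q = F r s := by
      intro p q r s
      rcases hi with rfl|rfl|rfl|rfl <;> rcases hj with rfl|rfl|rfl|rfl <;> try omega
      · -- i = 2, j = 1
        have h3 := h (F r s) (F q p) (F a a) (F a a)
        simp only [pick] at h3
        rw [h r s q p, h a a a a] at h3
        simp only [pick] at h3
        rw [h] at h3
        rw [h] at h3
        simp only [pick] at h3
        exact h3.symm
      · -- i = 3, j = 1
        have h3 := h (F p a) (F s a) (F q a) (F r a)
        simp only [pick] at h3
        rw [h p a s a, h q a r a] at h3
        simp only [pick] at h3
        rw [h] at h3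
        rw [h] at h3
        simp only [pick] at h3
        exact h3.symm
      · -- i = 3, j = 2
        have h3 := h (F a s) (F p a) (F a q) (F r a)
        simp only [pick] at h3
        rw [h a s p a, h a q r a] at h3
        simp only [pick] at h3
        rw [h] at h3
        rw [h] at h3
        simp only [pick] at h3
        exact h3.symm
      · -- i = 4, j = 1
        have h3 := h (F a p) (F a s) (F r a) (F q a)
        simp only [pick] at h3
        rw [h a p a s, h r a q a] at h3
        simp only [pick] at h3
        rw [h] at h3
        rw [h] at h3
        simp only [pick] at h3
        exact h3.symm
      · -- i = 4, j = 2
        have h3 := h (F a s) (F a p) (F a r) (F a q)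
        simp only [pick] at h3
        rw [h a s a p, h a r a q] at h3
        simp only [pick] at h3
        rw [h] at h3
        rw [h] at h3
        simp only [pick] at h3
        exact h3.symm
      · -- i = 4, j = 3
        have h3 := h (F a a) (F a a) (F q p) (F r s)
        simp only [pick] at h3
        rw [h a a a a, h q p r s] at h3
        simp only [pick] at h3
        rw [h] at h3
        rw [h] at h3
        simp only [pick] at h3
        exact h3.symm
    exact key x y a a
  · rintro ⟨c, hc⟩ x1 x2 x3 x4
    simp [hc]
end

section
/- Let X be a nonempty set. An operation F : X² → X is (2,2)-selective (respectively (3,3)-selective) if and only if the restriction of F to ran(F)² is constant and F(x,x) ∈ id(F) for all x ∈ X. -/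
theorem stmt_1 {X : Type*} [Nonempty X] (F : X → X → X) :
    ((∀ x1 x2 x3 x4 : X, F (F x1 x2) (F x3 x4) = F x2 x2) ↔
      ((∃ c : X, ∀ u ∈ {z : X | ∃ x y : X, F x y = z},
          ∀ v ∈ {z : X | ∃ x y : X, F x y = z}, F u v = c) ∧
        ∀ x : X, F (F x x) (F x x) = F x x)) ∧
    ((∀ x1 x2 x3 x4 : X, F (F x1 x2) (F x3 x4) = F x3 x3) ↔
      ((∃ c : X, ∀ u ∈ {z : X | ∃ x y : X, F x y = z},
          ∀ v ∈ {z : X | ∃ x y : X, F x y = z}, F u v = c) ∧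
        ∀ x : X, F (F x x) (F x x) = F x x)) := by
  obtain ⟨x0⟩ := ‹Nonempty X›
  constructor
  · constructor
    · intro h
      have key : ∀ x y : X, F x x = F y y := by
        intro x y
        have h1 : F (F x x) (F y y) = F x x := h x x y y
        have h2 : F (F (F x x) (F y y)) (F y y) = F (F y y) (F y y) :=
          h (F x x) (F y y) y y
        rw [h1, h y y y y, h1] at h2
        exact h2
      refine ⟨⟨F x0 x0, ?_⟩, fun x => h x x x x⟩
      rintro u ⟨a, b, rfl⟩ v ⟨c, d, rfl⟩
      rw [h a b c d]; exact key b x0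
    · rintro ⟨⟨c, hc⟩, hid⟩ x1 x2 x3 x4
      have hd : ∀ x : X, F x x = c := fun x => by
        have := hc (F x x) ⟨x, x, rfl⟩ (F x x) ⟨x, x, rfl⟩
        rw [hid x] at this; exact this
      rw [hc (F x1 x2) ⟨x1, x2, rfl⟩ (F x3 x4) ⟨x3, x4, rfl⟩, hd x2]
  · constructor
    · intro h
      have key : ∀ x y : X, F x x = F y y := by
        intro x y
        have h1 : F (F x x) (F y y) = F y y := h x x y y
        have h2 : F (F y y) (F (F x x) (F y y)) = F (F x x) (F x x) :=
          h y y (F x x) (F y y)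
        rw [h1, h y y y y, h x x x x] at h2
        exact h2.symm
      refine ⟨⟨F x0 x0, ?_⟩, fun x => h x x x x⟩
      rintro u ⟨a, b, rfl⟩ v ⟨c, d, rfl⟩
      rw [h a b c d]; exact key c x0
    · rintro ⟨⟨c, hc⟩, hid⟩ x1 x2 x3 x4
      have hd : ∀ x : X, F x x = c := fun x => by
        have := hc (F x x) ⟨x, x, rfl⟩ (F x x) ⟨x, x, rfl⟩
        rw [hid x] at this; exact this
      rw [hc (F x1 x2) ⟨x1, x2, rfl⟩ (F x3 x4) ⟨x3, x4, rfl⟩, hd x3]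
end

section
/- Let X be a nonempty set. An operation F : X² → X is (1,1)-selective (respectively (4,4)-selective) if and only if the following two conditions hold: (a) F(x,y) = F(x,x) (respectively F(x,y) = F(y,y)) for all x,y ∈ ran(F); (b) F(x,y) ∼_F x (respectively F(x,y) ∼_F y) for all x,y ∈ X, i.e., F(F(x,y),F(x,y)) = F(x,x) (respectively = F(y,y)). -/
theorem stmt_2 {X : Type*} [Nonempty X] (F : X → X → X) :
    ((∀ x1 x2 x3 x4 : X, F (F x1 x2) (F x3 x4) = F x1 x1) ↔
      ((∀ x ∈ {z : X | ∃ a b : X, F a b = z},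
          ∀ y ∈ {z : X | ∃ a b : X, F a b = z}, F x y = F x x) ∧
        ∀ x y : X, F (F x y) (F x y) = F x x)) ∧
    ((∀ x1 x2 x3 x4 : X, F (F x1 x2) (F x3 x4) = F x4 x4) ↔
      ((∀ x ∈ {z : X | ∃ a b : X, F a b = z},
          ∀ y ∈ {z : X | ∃ a b : X, F a b = z}, F x y = F y y) ∧
        ∀ x y : X, F (F x y) (F x y) = F y y)) := by
  constructor
  · constructor
    · intro h
      refine ⟨?_, fun x y => h x y x y⟩
      rintro x ⟨a, b, rfl⟩ y ⟨c, d, rfl⟩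
      rw [h a b c d, h a b a b]
    · rintro ⟨ha, hb⟩ x1 x2 x3 x4
      rw [ha _ ⟨x1, x2, rfl⟩ _ ⟨x3, x4, rfl⟩, hb]
  · constructor
    · intro h
      refine ⟨?_, fun x y => h x y x y⟩
      rintro x ⟨a, b, rfl⟩ y ⟨c, d, rfl⟩
      rw [h a b c d, h c d c d]
    · rintro ⟨ha, hb⟩ x1 x2 x3 x4
      rw [ha _ ⟨x1, x2, rfl⟩ _ ⟨x3, x4, rfl⟩, hb]
end

section
/- Let X be a nonempty set and let F : X² → X be a (1,4)-selective operation. Then for all x, y ∈ X, F(x,y) = F(y,x) if and only if F(x,x) = F(y,y). Moreover, if x, y ∈ X satisfy either of these equalities, then F(x,y) = F(y,x) = F(x,x) = F(y,y). -/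
theorem stmt_5 {X : Type*} [Nonempty X] (F : X → X → X)
    (hF : ∀ x1 x2 x3 x4 : X, F (F x1 x2) (F x3 x4) = F x1 x4) :
    (∀ x y : X, F x y = F y x ↔ F x x = F y y) ∧
    (∀ x y : X, (F x y = F y x ∨ F x x = F y y) →
      (F x y = F y x ∧ F y x = F x x ∧ F x x = F y y)) := by
  have h1 : ∀ x y : X, F x y = F y x → F x y = F x x ∧ F y x = F y y := by
    intro x y h
    constructor
    · have a := hF x y y x
      have b := hF x y x y
      rw [← h] at a
      exact b.symm.trans a
    · have a := hF y x x y
      have b := hF y x y x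
      rw [h] at a
      exact b.symm.trans a
  have h2 : ∀ x y : X, F x x = F y y → F x y = F x x ∧ F y x = F x x := by
    intro x y h
    constructor
    · have a := hF x x y y
      rw [← h] at a
      rw [← a, hF x x x x]
    · have a := hF y y x x
      rw [h] at a
      rw [← a, hF y y y y, ← h]
  have main : ∀ x y : X, (F x y = F y x ∨ F x x = F y y) →
      (F x y = F y x ∧ F y x = F x x ∧ F x x = F y y) := by
    intro x y h
    rcases h with h | h
    · obtain ⟨a, b⟩ := h1 x y h
      exact ⟨h, by rw [← h, a], by rw [← a, h, b]⟩
    · obtain ⟨a, b⟩ := h2 x y h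
      exact ⟨by rw [a, ← b], b, h⟩
  refine ⟨fun x y => ⟨fun h => ((main x y (Or.inl h)).2.2), fun h => (main x y (Or.inr h)).1⟩, main⟩
end

section
/- Let X be a nonempty set and let F : X² → X be an operation. The following assertions are equivalent: (i) F is (1,3)-selective; (ii) for all x, y ∈ X and all u, v ∈ X with u ∼_F x and v ∼_F y, one has F(x,y) = F(u,v) and F(x,y) ∼_F x; (iii) F(F(x,y), z) = F(x,z) and F(x, F(y,z)) = F(x,y) for all x, y, z ∈ X. -/
theorem stmt_8 {X : Type*} [Nonempty X] (F : X → X → X) :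
    [(∀ x1 x2 x3 x4 : X, F (F x1 x2) (F x3 x4) = F x1 x3),
     (∀ x y u v : X, F u u = F x x → F v v = F y y →
        F x y = F u v ∧ F (F x y) (F x y) = F x x),
     (∀ x y z : X, F (F x y) z = F x z ∧ F x (F y z) = F x y)].TFAE := by
  tfae_have 1 → 2 := by
    intro h1 x y u v hu hv
    refine ⟨?_, h1 x y x y⟩
    have : F (F x x) (F y y) = F (F u u) (F v v) := by rw [hu, hv]
    rw [h1, h1] at this
    exact this
  tfae_have 2 → 3 := by
    intro h2 x y z
    constructor
    · exact ((h2 x z (F x y) z (h2 x y x y rfl rfl).2 rfl).1).symm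
    · exact ((h2 x y x (F y z) rfl (h2 y z y z rfl rfl).2).1).symm
  tfae_have 3 → 1 := by
    intro h3 x1 x2 x3 x4
    rw [(h3 x1 x2 (F x3 x4)).1, (h3 x1 x3 x4).2]
  tfae_finish
end

section
/- Let X be a nonempty set and let F : X² → X be a (1,3)-selective operation. Then the following assertions are equivalent: (i) F is associative; (ii) F(x,y) = F(x,z) for all x, y, z ∈ X; (iii) F is bisymmetric; (iv) F(x,y) = x for all x ∈ ran(F) and all y ∈ X. -/
theorem stmt_9 {X : Type*} [Nonempty X] (F : X → X → X)
    (hF : ∀ x1 x2 x3 x4 : X, F (F x1 x2) (F x3 x4) = F x1 x3) :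
    [(∀ x y z : X, F x (F y z) = F (F x y) z),
     (∀ x y z : X, F x y = F x z),
     (∀ x y u v : X, F (F x y) (F u v) = F (F x u) (F y v)),
     (∀ x ∈ {z : X | ∃ a b : X, F a b = z}, ∀ y : X, F x y = x)].TFAE := by
  tfae_have 1 → 2 := by
    intro h1 x y z
    have D : ∀ x y z w : X, F x (F y (F z w)) = F x z := by
      intro x y z w
      rw [h1, hF]
    have C : ∀ x u v : X, F x (F u v) = F x u := by
      intro x u v
      calc F x (F u v) = F x (F x (F (F u v) x)) := (D x x (F u v) x).symm
        _ = F x (F x (F u (F v x))) := by rw [h1 u v x]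
        _ = F x u := D x x u (F v x)
    have B : ∀ x y u : X, F (F x y) u = F x u := by
      intro x y u
      have h := C (F x y) u u
      rw [hF] at h
      exact h.symm
    calc F x y = F x (F y z) := (C x y z).symm
      _ = F (F x y) z := h1 x y z
      _ = F x z := B x y z
  tfae_have 2 → 1 := by
    intro h2 x y z
    calc F x (F y z) = F x y := h2 x (F y z) y
      _ = F (F x y) (F y y) := (hF x y y y).symm
      _ = F (F x y) z := h2 (F x y) (F y y) z
  tfae_have 2 → 3 := by
    intro h2 x y u v
    rw [hF, hF]
    exact h2 x u y
  tfae_have 3 → 2 := by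
    intro h3 x y z
    have h := h3 x z y (F y z)
    rw [hF, hF] at h
    exact h
  tfae_have 2 → 4 := by
    rintro h2 x ⟨a, b, rfl⟩ y
    calc F (F a b) y = F (F a b) (F b b) := h2 (F a b) y (F b b)
      _ = F a b := hF a b b b
  tfae_have 4 → 2 := by
    intro h4 x y z
    calc F x y = F (F x y) (F z z) := (h4 (F x y) ⟨x, y, rfl⟩ (F z z)).symm
      _ = F x z := hF x y z z
  tfae_finish
end

section
/- Let X be a nonempty set and let F : X² → X be a (1,3)-selective operation. Then the following assertions are equivalent: (i) F is quasitrivial; (ii) F is idempotent; (iii) for every x ∈ X the ∼_F-equivalence class of x is a singleton, i.e., F(x,x) = F(y,y) implies x = y; (iv) F = π₁; (v) F is anticommutative. -/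
theorem stmt_10 {X : Type*} [Nonempty X] (F : X → X → X)
    (hF : ∀ x1 x2 x3 x4 : X, F (F x1 x2) (F x3 x4) = F x1 x3) :
    [(∀ x y : X, F x y = x ∨ F x y = y),
     (∀ x : X, F x x = x),
     (∀ x y : X, F x x = F y y → x = y),
     (∀ x y : X, F x y = x),
     (∀ x y : X, F x y = F y x → x = y)].TFAE := by
  have key : ∀ x : X, F (F x x) (F x x) = F x x := fun x => hF x x x x
  tfae_have 1 → 2 := by
    intro h x; rcases h x x with h' | h' <;> exact h'
  tfae_have 2 → 4 := by
    intro h x y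
    have := hF x y x y
    rw [h (F x y), h x] at this
    exact this
  tfae_have 4 → 1 := fun h x y => Or.inl (h x y)
  tfae_have 2 → 3 := by
    intro h x y hxy
    rw [h x, h y] at hxy; exact hxy
  tfae_have 3 → 2 := by
    intro h x
    exact h (F x x) x (key x)
  tfae_have 4 → 5 := by
    intro h x y hxy
    rw [h x y, h y x] at hxy; exact hxy
  tfae_have 5 → 2 := by
    intro h x
    have h1 : F x (F x x) = F x x := by
      have := hF x x (F x x) (F x x)
      rw [key x, key x] at this
      exact this.symm
    have h2 : F (F x x) x = F x x := by
      have := hF (F x x) (F x x) x x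
      rw [key x, key x] at this
      exact this.symm
    exact (h x (F x x) (h1.trans h2.symm)).symm
  tfae_finish
end

section
/- Let X be a nonempty finite set and let F : X² → X be a (1,3)-selective operation. Then |ran(F)| ≤ |id(F)|². -/
theorem stmt_11 {X : Type*} [Nonempty X] [Finite X] (F : X → X → X)
    (hF : ∀ x1 x2 x3 x4 : X, F (F x1 x2) (F x3 x4) = F x1 x3) :
    {z : X | ∃ x y : X, F x y = z}.ncard ≤ {x : X | F x x = x}.ncard ^ 2 := by
  set I : Set X := {x : X | F x x = x} with hI
  have hg : ∀ x : X, F x x ∈ I := by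
    intro x
    have := hF x x x x
    simpa [hI] using this
  have hsub : {z : X | ∃ x y : X, F x y = z} ⊆ (fun p : X × X => F p.1 p.2) '' (I ×ˢ I) := by
    rintro z ⟨x, y, rfl⟩
    exact ⟨(F x x, F y y), ⟨hg x, hg y⟩, (hF x x y y).trans rfl⟩
  have h1 : {z : X | ∃ x y : X, F x y = z}.ncard ≤
      ((fun p : X × X => F p.1 p.2) '' (I ×ˢ I)).ncard :=
    Set.ncard_le_ncard hsub (Set.toFinite _)
  have h2 : ((fun p : X × X => F p.1 p.2) '' (I ×ˢ I)).ncard ≤ (I ×ˢ I).ncard :=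
    Set.ncard_image_le (Set.toFinite _)
  have h3 : (I ×ˢ I).ncard = I.ncard * I.ncard := by
    rw [← Nat.card_coe_set_eq, ← Nat.card_coe_set_eq,
      Nat.card_congr (Equiv.Set.prod I I), Nat.card_prod]
  calc {z : X | ∃ x y : X, F x y = z}.ncard ≤ (I ×ˢ I).ncard := h1.trans h2
    _ = I.ncard ^ 2 := by rw [h3, sq]
end

section
/- Let X be a nonempty finite set of cardinality n ≥ 1, let F : X² → X be a surjective (1,3)-selective operation, and let k = |id(F)|. Then n ≤ k², and for every x ∈ id(F) the cardinality of the ∼_F-equivalence class [x]_{∼_F} is at most k. -/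
theorem stmt_12 {X : Type*} [Nonempty X] [Finite X] (F : X → X → X)
    (hF : ∀ x1 x2 x3 x4 : X, F (F x1 x2) (F x3 x4) = F x1 x3)
    (hsurj : ∀ z : X, ∃ x y : X, F x y = z)
    (n k : ℕ) (hn : n = Nat.card X) (hk : k = {x : X | F x x = x}.ncard) :
    n ≤ k ^ 2 ∧
      ∀ x : X, F x x = x → {y : X | F y y = F x x}.ncard ≤ k := by
  set S : Set X := {x : X | F x x = x} with hS
  have hSfin : S.Finite := Set.toFinite S
  -- g(F x y) = g x
  have h1 : ∀ x y : X, F (F x y) (F x y) = F x x := fun x y => hF x y x y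
  -- F (g x) (g y) = F x y
  have h2 : ∀ x y : X, F (F x x) (F y y) = F x y := fun x y => hF x x y y
  have hgS : ∀ x : X, F x x ∈ S := by
    intro x; simpa [hS] using h1 x x
  constructor
  · -- n ≤ k^2
    have hfsurj : Function.Surjective (fun p : S × S => F p.1.1 p.2.1) := by
      intro z
      obtain ⟨x, y, hxy⟩ := hsurj z
      exact ⟨⟨⟨F x x, hgS x⟩, ⟨F y y, hgS y⟩⟩, by simpa [h2] using hxy⟩
    have := Nat.card_le_card_of_surjective _ hfsurj
    have hcard : Nat.card (S × S) = k * k := by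
      rw [Nat.card_prod, Nat.card_coe_set_eq, ← hk]
    rw [hn, sq]
    omega
  · intro x hx
    have hsub : {y : X | F y y = F x x} ⊆ (fun s => F x s) '' S := by
      intro y hy
      obtain ⟨a, b, hab⟩ := hsurj y
      have hga : F a a = F x x := by rw [← hy, ← hab, h1]
      refine ⟨F b b, hgS b, ?_⟩
      calc F x (F b b) = F (F x x) (F (F b b) (F b b)) := (hF x x (F b b) (F b b)).symm
        _ = F (F a a) (F b b) := by rw [hga, h1]
        _ = F a b := h2 a b
        _ = y := hab
    calc {y : X | F y y = F x x}.ncard ≤ ((fun s => F x s) '' S).ncard :=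
          Set.ncard_le_ncard hsub (hSfin.image _)
      _ ≤ S.ncard := Set.ncard_image_le hSfin
      _ = k := hk.symm
end

section
/- Let X be a nonempty set and let F : X² → X be an operation. The following assertions are equivalent: (i) F is (1,4)-selective; (ii) the restriction of F to ran(F)² is (1,4)-selective and F(x,y) = F(F(x,x), F(y,y)) for all x, y ∈ X; (iii) F(F(x,y), z) = F(x, F(y,z)) = F(x,z) for all x, y, z ∈ X. -/
theorem stmt_13 {X : Type*} [Nonempty X] (F : X → X → X) :
    [(∀ x1 x2 x3 x4 : X, F (F x1 x2) (F x3 x4) = F x1 x4),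
     ((∀ x1 ∈ {z : X | ∃ a b : X, F a b = z}, ∀ x2 ∈ {z : X | ∃ a b : X, F a b = z},
        ∀ x3 ∈ {z : X | ∃ a b : X, F a b = z}, ∀ x4 ∈ {z : X | ∃ a b : X, F a b = z},
          F (F x1 x2) (F x3 x4) = F x1 x4) ∧
       (∀ x y : X, F x y = F (F x x) (F y y))),
     (∀ x y z : X, F (F x y) z = F x (F y z) ∧ F x (F y z) = F x z)].TFAE := by
  tfae_have 1 → 2 := by
    intro h
    exact ⟨fun x1 _ x2 _ x3 _ x4 _ => h x1 x2 x3 x4, fun x y => (h x x y y).symm⟩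
  tfae_have 2 → 1 := by
    rintro ⟨hr, hd⟩ x1 x2 x3 x4
    calc F (F x1 x2) (F x3 x4)
        = F (F (F x1 x1) (F x2 x2)) (F (F x3 x3) (F x4 x4)) := by rw [← hd, ← hd]
      _ = F (F x1 x1) (F x4 x4) :=
          hr _ ⟨_, _, rfl⟩ _ ⟨_, _, rfl⟩ _ ⟨_, _, rfl⟩ _ ⟨_, _, rfl⟩
      _ = F x1 x4 := (hd x1 x4).symm
  tfae_have 1 → 3 := by
    intro h x y z
    have idem : ∀ a b : X, F (F a b) (F a b) = F a b := fun a b => h a b a b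
    constructor
    · have h1 : F (F x y) z = F x z := by
        have t := h (F x y) (F x y) z z
        rw [idem] at t
        rw [← t]; exact h x y z z
      have h2 : F x (F y z) = F x z := by
        have t := h x x (F y z) (F y z)
        rw [idem] at t
        rw [← t]; exact h x x y z
      rw [h1, h2]
    · have t := h x x (F y z) (F y z)
      rw [idem] at t
      rw [← t]; exact h x x y z
  tfae_have 3 → 1 := by
    intro h x1 x2 x3 x4
    exact ((h x1 x2 (F x3 x4)).1.trans (h x1 x2 (F x3 x4)).2).trans (h x1 x3 x4).2
  tfae_finish
end

section
/- Let X be a nonempty set. An operation F : X² → X is (1,4)-selective and quasitrivial if and only if F = π₁ or F = π₂. -/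
theorem stmt_14 {X : Type*} [Nonempty X] (F : X → X → X) :
    ((∀ x1 x2 x3 x4 : X, F (F x1 x2) (F x3 x4) = F x1 x4) ∧
      (∀ x y : X, F x y = x ∨ F x y = y)) ↔
    ((∀ x y : X, F x y = x) ∨ (∀ x y : X, F x y = y)) := by
  constructor
  · rintro ⟨h14, hq⟩
    by_contra h
    push_neg at h
    obtain ⟨h1, h2⟩ := h
    obtain ⟨a, b, hab⟩ := h1
    obtain ⟨c, d, hcd⟩ := h2
    have hdiag : ∀ x, F x x = x := fun x => by rcases hq x x with h | h <;> exact h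
    have hFab : F a b = b := (hq a b).resolve_left hab
    have hFcd : F c d = c := (hq c d).resolve_right hcd
    have hneab : a ≠ b := fun h => by subst h; exact hab (hdiag a)
    have hnecd : c ≠ d := fun h => by subst h; exact hcd (hdiag c)
    have row : ∀ y, F b y = F a y := fun y => by
      have := h14 a b y y; rwa [hFab, hdiag] at this
    have col : ∀ x, F x c = F x d := fun x => by
      have := h14 x x c d; rwa [hdiag, hFcd] at this
    have key : F b c = F a d := by rw [row c, col a]
    have key2 : F b d = F a d := by rw [← col b, key]
    rcases hq a d with h | h
    · have hbc : F b c = a := key.trans h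
      have hca : c = a := by
        rcases hq b c with h' | h'
        · exact absurd (h'.symm.trans hbc).symm hneab
        · exact h'.symm.trans hbc
      have hbd : F b d = a := key2.trans h
      rcases hq b d with h' | h'
      · exact hneab (h'.symm.trans hbd).symm
      · exact hnecd (hca.trans (h'.symm.trans hbd).symm)
    · have hbc : F b c = d := key.trans h
      have hac : F a c = d := (row c).symm.trans hbc
      rcases hq a c with h' | h'
      · have had : a = d := h'.symm.trans hac
        rcases hq b c with h'' | h''
        · exact hneab (((h''.symm.trans hbc).trans had.symm)).symm
        · exact hnecd (h''.symm.trans hbc)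
      · exact hnecd (h'.symm.trans hac)
  · rintro (h | h) <;> exact ⟨fun x1 x2 x3 x4 => by simp [h], fun x y => by simp [h]⟩
end

section
/- Let X be a nonempty set and let F : X² → X be a (1,4)-selective operation. Then (a) ran(F) = id(F), and (b) the binary relations ∼_{F,1} and ∼_{F,2} on X are transitive. -/
theorem stmt_15 {X : Type*} [Nonempty X] (F : X → X → X)
    (hF : ∀ x1 x2 x3 x4 : X, F (F x1 x2) (F x3 x4) = F x1 x4) :
    {z : X | ∃ x y : X, F x y = z} = {x : X | F x x = x} ∧
    Transitive (fun x y : X => F x y = x) ∧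
    Transitive (fun x y : X => F x y = y) := by
  refine ⟨?_, ?_, ?_⟩
  · ext z
    constructor
    · rintro ⟨x, y, rfl⟩
      exact hF x y x y
    · intro hz
      exact ⟨z, z, hz⟩
  · intro x y z hxy hyz
    have := hF x y y z
    rw [hxy, hyz] at this
    exact this.symm.trans hxy
  · intro x y z hxy hyz
    have := hF x y y z
    rw [hxy, hyz] at this
    exact this.symm.trans hyz
end

section
/- Let X be a nonempty set and let F : X² → X be a (1,4)-selective operation. Then the following assertions are equivalent: (i) F is anticommutative; (ii) F is surjective; (iii) F is idempotent; (iv) ∼_{F,1} is an equivalence relation on X; (v) ∼_{F,2} is an equivalence relation on X. -/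
theorem stmt_16 {X : Type*} [Nonempty X] (F : X → X → X)
    (hF : ∀ x1 x2 x3 x4 : X, F (F x1 x2) (F x3 x4) = F x1 x4) :
    [(∀ x y : X, F x y = F y x → x = y),
     (∀ z : X, ∃ x y : X, F x y = z),
     (∀ x : X, F x x = x),
     Equivalence (fun x y : X => F x y = x),
     Equivalence (fun x y : X => F x y = y)].TFAE := by
  tfae_have 3 → 1 := by
    intro h3 x y hxy
    have h1 : F (F x y) (F y x) = x := by rw [hF, h3]
    have h2 : F (F y x) (F x y) = y := by rw [hF, h3]
    rw [hxy] at h1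
    rw [hxy] at h2
    exact h1.symm.trans h2
  tfae_have 1 → 3 := by
    intro h1 x
    have hvw : F (F x (F x x)) (F (F x x) x) = F x x := hF x (F x x) (F x x) x
    have hwv : F (F (F x x) x) (F x (F x x)) = F (F x x) (F x x) := hF (F x x) x x (F x x)
    have hxx : F (F x x) (F x x) = F x x := hF x x x x
    have heq : F x (F x x) = F (F x x) x := h1 _ _ (hvw.trans (hwv.trans hxx).symm)
    exact (h1 x (F x x) heq).symm
  tfae_have 3 → 2 := by
    intro h3 z
    exact ⟨z, z, h3 z⟩
  tfae_have 2 → 3 := by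
    intro h2 x
    obtain ⟨a, b, hab⟩ := h2 x
    rw [← hab]
    exact hF a b a b
  tfae_have 3 → 4 := by
    intro h3
    refine ⟨fun x => h3 x, ?_, ?_⟩
    · intro x y hxy
      have h := hF y y x y
      rw [h3 y, hxy] at h
      exact h
    · intro x y z hxy hyz
      have h := hF x y y z
      rw [hxy, hyz, hxy] at h
      exact h.symm
  tfae_have 4 → 3 := by
    intro h4 x
    exact h4.refl x
  tfae_have 3 → 5 := by
    intro h3
    refine ⟨fun x => h3 x, ?_, ?_⟩
    · intro x y hxy
      have h := hF x y x x
      rw [hxy, h3 x] at h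
      exact h
    · intro x y z hxy hyz
      have h := hF x y y z
      rw [hxy, hyz, hyz] at h
      exact h.symm
  tfae_have 5 → 3 := by
    intro h5 x
    exact h5.refl x
  tfae_finish
end

section
/- Let X be a nonempty set and let F : X² → X be an operation. The following assertions are equivalent: (i) F is (1,4)-selective and idempotent; (ii) ∼_{F,1} and ∼_{F,2} are equivalence relations on X such that [x]_{∼_{F,2}} ∩ [y]_{∼_{F,1}} = {F(x,y)} for all x, y ∈ X; (iii) the following three conditions hold: (a) ∼_{F,1} and ∼_{F,2} are equivalence relations on X; (b) for all x, y, z ∈ X with x ∼_{F,1} y there exists a unique u ∈ X with u ∼_{F,1} z and x ∼_{F,2} u; (c) F(x,y) = F(x,z) for all x, y, z ∈ X such that y ∼_{F,1} z. -/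
theorem stmt_17 {X : Type*} [Nonempty X] (F : X → X → X) :
    [((∀ x1 x2 x3 x4 : X, F (F x1 x2) (F x3 x4) = F x1 x4) ∧ (∀ x : X, F x x = x)),
     (Equivalence (fun x y : X => F x y = x) ∧ Equivalence (fun x y : X => F x y = y) ∧
       ∀ x y : X, {u : X | F u x = x} ∩ {u : X | F u y = u} = {F x y}),
     (Equivalence (fun x y : X => F x y = x) ∧ Equivalence (fun x y : X => F x y = y) ∧
       (∀ x y z : X, F x y = x → ∃! u : X, F u z = u ∧ F x u = u) ∧
       (∀ x y z : X, F y z = y → F x y = F x z))].TFAE := by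
  tfae_have 1 → 2 := by
    rintro ⟨hs, hi⟩
    have E1 : Equivalence (fun x y : X => F x y = x) := by
      refine ⟨hi, ?_, ?_⟩
      · intro x y h
        have := hs y y x y
        rw [hi y] at this
        rw [h] at this
        exact this
      · intro x y z hxy hyz
        have := hs x x y z
        rw [hi x, hyz] at this
        rw [← this]; exact hxy
    have E2 : Equivalence (fun x y : X => F x y = y) := by
      refine ⟨hi, ?_, ?_⟩
      · intro x y h
        have := hs x y x x
        rw [hi x] at this
        rw [h] at this
        exact this
      · intro x y z hxy hyz
        have := hs x y z z
        rw [hi z, hxy] at this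
        rw [← this]; exact hyz
    refine ⟨E1, E2, fun x y => ?_⟩
    ext u
    simp only [Set.mem_inter_iff, Set.mem_setOf_eq, Set.mem_singleton_iff]
    constructor
    · rintro ⟨h1, h2⟩
      have := hs u x y y
      rw [h1, hi y, h2] at this
      exact this.symm
    · rintro rfl
      constructor
      · have := hs x y x x
        rw [hi x] at this
        exact this
      · have := hs x y y y
        rw [hi y] at this
        exact this
  tfae_have 2 → 3 := by
    rintro ⟨E1, E2, hset⟩
    have mem : ∀ x y u : X, (F u x = x ∧ F u y = u) ↔ u = F x y := by
      intro x y u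
      have := Set.ext_iff.mp (hset x y) u
      simpa using this
    have p1 : ∀ x y : X, F (F x y) x = x ∧ F (F x y) y = F x y :=
      fun x y => (mem x y _).mpr rfl
    refine ⟨E1, E2, ?_, ?_⟩
    · intro x y z _
      refine ⟨F x z, ⟨(p1 x z).2, E2.symm (p1 x z).1⟩, ?_⟩
      rintro u ⟨hu1, hu2⟩
      exact (mem x z u).mp ⟨E2.symm hu2, hu1⟩
    · intro x y z hyz
      exact (mem x z (F x y)).mp ⟨(p1 x y).1, E1.trans (p1 x y).2 hyz⟩
  tfae_have 3 → 1 := by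
    rintro ⟨E1, E2, hb, hc⟩
    have p : ∀ a b : X, F (F a b) b = F a b ∧ F a (F a b) = F a b := by
      intro a b
      obtain ⟨u, ⟨hu1, hu2⟩, _⟩ := hb a a b (E1.refl a)
      have hab : F a b = u := by
        have h := hc a u b hu1
        rw [hu2] at h
        exact h.symm
      rw [hab]
      exact ⟨hu1, hu2⟩
    have linv : ∀ a b c : X, F a b = b → F a c = F b c := by
      intro a b c hab
      have htrans : F b (F a c) = F a c := E2.trans (E2.symm hab) (p a c).2
      obtain ⟨w, _, huniq⟩ := hb b b c (E1.refl b)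
      exact (huniq _ ⟨(p a c).1, htrans⟩).trans (huniq _ ⟨(p b c).1, (p b c).2⟩).symm
    refine ⟨fun x1 x2 x3 x4 => ?_, fun x => E1.refl x⟩
    have s1 : F (F x1 x2) (F x3 x4) = F (F x1 x2) x4 := hc _ _ _ (p x3 x4).1
    have s2 : F x1 x4 = F (F x1 x2) x4 := linv x1 (F x1 x2) x4 (p x1 x2).2
    rw [s1, ← s2]
  tfae_finish
end

section
/- Let X be a nonempty set and let F : X² → X be a bisymmetric operation. Then F is (1,2)-selective if and only if the following two conditions hold: (i) F(x,y) = F(x,z) for all x, y, z ∈ X; (ii) F(x,y) = x for all x ∈ ran(F) and all y ∈ X. -/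
theorem stmt_18 {X : Type*} [Nonempty X] (F : X → X → X)
    (hbisym : ∀ x y u v : X, F (F x y) (F u v) = F (F x u) (F y v)) :
    (∀ x1 x2 x3 x4 : X, F (F x1 x2) (F x3 x4) = F x1 x2) ↔
      ((∀ x y z : X, F x y = F x z) ∧
        (∀ x ∈ {z : X | ∃ a b : X, F a b = z}, ∀ y : X, F x y = x)) := by
  constructor
  · intro hsel
    have hi : ∀ x y z : X, F x y = F x z := by
      intro x y z
      have h1 := hsel x y z z
      have h2 := hbisym x y z z
      have h3 := hsel x z y z
      rw [h1, h3] at h2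
      exact h2
    refine ⟨hi, ?_⟩
    rintro x ⟨a, b, rfl⟩ y
    calc F (F a b) y = F (F a b) (F a b) := hi _ _ _
      _ = F a b := hsel a b a b
  · rintro ⟨hi, hii⟩ x1 x2 x3 x4
    exact hii (F x1 x2) ⟨x1, x2, rfl⟩ _
end

section
/- Let X be a nonempty set and let F : X² → X be an associative operation. Then F is (1,2)-selective if and only if the following two conditions hold: (i) F(x,y) = F(x, F(y,z)) for all x, y, z ∈ X; (ii) F(x,y) = x for all x ∈ ran(F) and all y ∈ X. -/
theorem stmt_19 {X : Type*} [Nonempty X] (F : X → X → X)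
    (hassoc : ∀ x y z : X, F x (F y z) = F (F x y) z) :
    (∀ x1 x2 x3 x4 : X, F (F x1 x2) (F x3 x4) = F x1 x2) ↔
      ((∀ x y z : X, F x y = F x (F y z)) ∧
        (∀ x ∈ {z : X | ∃ a b : X, F a b = z}, ∀ y : X, F x y = x)) := by
  constructor
  · intro hsel
    have hi : ∀ x y z : X, F x y = F x (F y z) := by
      intro x y z
      set A := F x (F y z) with hA
      have hAw : ∀ w : X, F A w = F x y := by
        intro w
        have h1 : F (F x y) (F z w) = F x y := hsel x y z w
        calc F A w = F (F (F x y) z) w := by rw [hA, hassoc]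
          _ = F (F x y) (F z w) := (hassoc (F x y) z w).symm
          _ = F x y := h1
      have h2 : F A (F A A) = A := by
        have := hsel x (F y z) A A
        simpa [hA] using this
      rw [hAw (F A A)] at h2
      exact h2
    refine ⟨hi, ?_⟩
    rintro x ⟨a, b, rfl⟩ y
    rw [← hassoc]
    exact (hi a b y).symm
  · rintro ⟨hi, hii⟩ x1 x2 x3 x4
    exact hii (F x1 x2) ⟨x1, x2, rfl⟩ (F x3 x4)
end
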